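/- arXiv:1412.7912 — 2 statements merged into one kernel-verified Lean document; each statement's English description precedes it below -/
import Mathlib

section
/- Consider maximizing G(x) = U(∑_{r∈s'} x_r) − ∑_{r∈s'} (α b_r + q_r) x_r subject to 0 ≤ x_r ≤ c_r, where U is concave, differentiable and increasing, and α b_r + q_r ≥ 0. Then there exists an optimal solution x* such that x*_r < c_r for at most one route r with x*_r > 0. -/
open Set

private lemma sum_shift {ι : Type*} [Fintype ι] [DecidableEq ι] (f x : ι → ℝ) (i j : ι)
    (hij : i ≠ j) (t : ℝ) :
    ∑ r, f r * (if r = i then x i + t else if r = j then x j - t else x r)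
      = ∑ r, f r * x r + f i * t - f j * t := by
  have h : ∀ r, f r * (if r = i then x i + t else if r = j then x j - t else x r)
      = f r * x r + (if r = i then f r * t else 0) - (if r = j then f r * t else 0) := by
    intro r
    split_ifs with h1 h2 <;> first
      | (exact absurd (h1 ▸ h2 : i = j) hij)
      | (subst_vars; ring)
  simp_rw [h]
  rw [Finset.sum_sub_distrib, Finset.sum_add_distrib]
  simp [Finset.sum_ite_eq' Finset.univ i, Finset.sum_ite_eq' Finset.univ j]

/-- In the box-constrained concave program `max U(∑ x_r) − ∑ (α b_r + q_r) x_r`,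
there exists an optimal solution with at most one active route below capacity. -/
theorem stmt_5 {ι : Type*} [Fintype ι]
    (U : ℝ → ℝ) (hconc : ConcaveOn ℝ (Set.Ici (0:ℝ)) U)
    (hmono : MonotoneOn U (Set.Ici (0:ℝ)))
    (hdiff : ∀ x ∈ Set.Ici (0:ℝ), DifferentiableAt ℝ U x)
    (α : ℝ) (hα : 0 < α)
    (b q c : ι → ℝ) (hb : ∀ r, 0 ≤ b r) (hq : ∀ r, 0 ≤ q r) (hc : ∀ r, 0 < c r)
    (G : (ι → ℝ) → ℝ)
    (hG : ∀ x, G x = U (∑ r, x r) - ∑ r, (α * b r + q r) * x r) :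
    ∃ x : ι → ℝ, (∀ r, x r ∈ Set.Icc 0 (c r)) ∧
      (∀ y : ι → ℝ, (∀ r, y r ∈ Set.Icc 0 (c r)) → G y ≤ G x) ∧
      (∀ i j : ι, 0 < x i → x i < c i → 0 < x j → x j < c j → i = j) := by
  classical
  set w : ι → ℝ := fun r => α * b r + q r with hw
  set K : Set (ι → ℝ) := {x | ∀ r, x r ∈ Set.Icc 0 (c r)} with hK
  -- K is compact and nonempty
  have hKeq : K = Set.pi Set.univ (fun r => Set.Icc 0 (c r)) := by
    ext x
    simp only [hK, Set.mem_setOf_eq, Set.mem_pi, Set.mem_univ, forall_true_left]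
  have hKcomp : IsCompact K := by
    rw [hKeq]; exact isCompact_univ_pi (fun r => isCompact_Icc)
  have hKne : K.Nonempty := ⟨fun _ => 0, fun r => ⟨le_refl 0, (hc r).le⟩⟩
  have hsum_nonneg : ∀ x ∈ K, (0:ℝ) ≤ ∑ r, x r := fun x hx =>
    Finset.sum_nonneg (fun r _ => (hx r).1)
  have hGfun : G = fun x => U (∑ r, x r) - ∑ r, w r * x r := funext hG
  have hUcont : ContinuousOn U (Set.Ici (0:ℝ)) :=
    fun x hx => (hdiff x hx).continuousAt.continuousWithinAt
  have hsumcont : Continuous fun x : ι → ℝ => ∑ r, x r :=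
    continuous_finset_sum _ (fun r _ => continuous_apply r)
  have hGcont : ContinuousOn G K := by
    rw [hGfun]
    apply ContinuousOn.sub
    · exact hUcont.comp hsumcont.continuousOn (fun x hx => hsum_nonneg x hx)
    · exact (continuous_finset_sum _ (fun r _ =>
        (continuous_const.mul (continuous_apply r)))).continuousOn
  obtain ⟨z, hzK, hzmax⟩ := hKcomp.exists_isMaxOn hKne hGcont
  set M : Set (ι → ℝ) := {x | x ∈ K ∧ ∀ y ∈ K, G y ≤ G x} with hM
  have hMne : M.Nonempty := ⟨z, hzK, fun y hy => hzmax hy⟩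
  set F : (ι → ℝ) → Finset ι :=
    fun x => Finset.univ.filter (fun r => 0 < x r ∧ x r < c r) with hF
  set S : Set ℕ := {n | ∃ x ∈ M, (F x).card = n} with hS
  have hSne : S.Nonempty := ⟨(F hMne.choose).card, hMne.choose, hMne.choose_spec, rfl⟩
  obtain ⟨x, hxM, hxcard⟩ := Nat.sInf_mem hSne
  refine ⟨x, hxM.1, hxM.2, ?_⟩
  have hone : ∀ i j, (0 < x i ∧ x i < c i) → (0 < x j ∧ x j < c j) → i = j := by
    by_contra hcon
    push_neg at hcon
    obtain ⟨i, j, hiF, hjF, hij⟩ := hcon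
    -- the shift construction
    have shift : ∀ (i j : ι), i ≠ j → (0 < x i ∧ x i < c i) → (0 < x j ∧ x j < c j) →
        ∀ t : ℝ, 0 ≤ t → t ≤ c i - x i → t ≤ x j →
        (fun r => if r = i then x i + t else if r = j then x j - t else x r) ∈ K ∧
        G (fun r => if r = i then x i + t else if r = j then x j - t else x r)
          = G x + (w j - w i) * t := by
      intro i j hij hiF hjF t ht hti htj
      constructor
      · intro r
        have hr := hxM.1 r
        rw [Set.mem_Icc] at hr ⊢
        simp only
        split_ifs with h1 h2
        · subst h1; exact ⟨by linarith [hiF.1], by linarith⟩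
        · subst h2; exact ⟨by linarith, by linarith [hjF.2]⟩
        · exact hr
      · rw [hG, hG]
        have h1 : ∑ r, (if r = i then x i + t else if r = j then x j - t else x r)
            = ∑ r, x r := by
          have := sum_shift (fun _ => (1:ℝ)) x i j hij t
          simpa using this
        have h2 := sum_shift w x i j hij t
        rw [h1, h2]
        ring
    -- no strictly smaller weight on a fractional source
    have key : ∀ (i j : ι), i ≠ j → (0 < x i ∧ x i < c i) → (0 < x j ∧ x j < c j) →
        ¬ w i < w j := by
      intro i j hij hiF hjF hlt
      set t := min (c i - x i) (x j) with htdef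
      have ht0 : 0 < t := lt_min (by linarith [hiF.2]) hjF.1
      obtain ⟨hyK, hGy⟩ := shift i j hij hiF hjF t ht0.le (min_le_left _ _) (min_le_right _ _)
      have := hxM.2 _ hyK
      nlinarith
    have hwij : w i = w j := by
      have h1 := key i j hij hiF hjF
      have h2 := key j i hij.symm hjF hiF
      push_neg at h1 h2
      linarith
    -- equal weights: shift to reduce the fractional count
    set t := min (c i - x i) (x j) with htdef
    have ht0 : 0 < t := lt_min (by linarith [hiF.2]) hjF.1
    obtain ⟨hyK, hGy⟩ := shift i j hij hiF hjF t ht0.le (min_le_left _ _) (min_le_right _ _)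
    set y : ι → ℝ := fun r => if r = i then x i + t else if r = j then x j - t else x r with hy
    have hyi : y i = x i + t := by simp [hy]
    have hyj : y j = x j - t := by simp [hy, Ne.symm hij]
    have hGyx : G y = G x := by rw [hGy, hwij]; ring
    have hyM : y ∈ M := ⟨hyK, fun u hu => by rw [hGyx]; exact hxM.2 u hu⟩
    have hsub : F y ⊆ F x := by
      intro r hr
      simp only [hF, Finset.mem_filter, Finset.mem_univ, true_and] at hr ⊢
      by_cases h1 : r = i
      · subst h1; exact hiF
      · by_cases h2 : r = j
        · subst h2; exact hjF
        · simpa [hy, h1, h2] using hr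
    have hmiss : i ∉ F y ∨ j ∉ F y := by
      rcases min_cases (c i - x i) (x j) with ⟨heq, _⟩ | ⟨heq, _⟩
      · left
        have hyic : y i = c i := by rw [hyi, htdef, heq]; ring
        intro hmem
        simp only [hF, Finset.mem_filter, Finset.mem_univ, true_and] at hmem
        rw [hyic] at hmem
        exact lt_irrefl _ hmem.2
      · right
        have hyj0 : y j = 0 := by rw [hyj, htdef, heq]; ring
        intro hmem
        simp only [hF, Finset.mem_filter, Finset.mem_univ, true_and] at hmem
        rw [hyj0] at hmem
        exact lt_irrefl _ hmem.1
    have hss : F y ⊂ F x := by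
      rcases hmiss with h | h
      · exact ⟨hsub, fun hsub' => h (hsub' (by
          simp only [hF, Finset.mem_filter, Finset.mem_univ, true_and]; exact hiF))⟩
      · exact ⟨hsub, fun hsub' => h (hsub' (by
          simp only [hF, Finset.mem_filter, Finset.mem_univ, true_and]; exact hjF))⟩
    have hlt : (F y).card < (F x).card := Finset.card_lt_card hss
    have : sInf S ≤ (F y).card := Nat.sInf_le ⟨y, hyM, rfl⟩
    omega
  intro i j hi1 hi2 hj1 hj2
  exact hone i j ⟨hi1, hi2⟩ ⟨hj1, hj2⟩
end

section
/- Suppose x₁*, x₂* > 0, costs P_i(x) = b_i x + θ_i with b₂ ≥ b₁, θ_i ≥ 0, and suppose moving all flow to route 1, i.e. replacing (x₁*, x₂*) by (x₁* + x₂*, 0), changes the total cost by P₁(x₁*) + P₂(x₂*) − P₁(x₁* + x₂*) = (b₂ − b₁)x₂* + θ₂. If additionally b₂ − b₁ > (θ₁ − θ₂)/(x₁* + x₂*), then this change exceeds (x₂* θ₁ + x₁* θ₂)/(x₁* + x₂*), which is positive when θ₁, θ₂ are not both zero; hence consolidation strictly decreases cost. -/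
/-- Two-route exchange: consolidating flow onto route 1 changes the affine-plus-startup
cost by `(b₂−b₁)x₂* + θ₂`; under `b₂ − b₁ > (θ₁−θ₂)/(x₁*+x₂*)` this change exceeds
`(x₂*θ₁ + x₁*θ₂)/(x₁*+x₂*)`, which is positive unless `θ₁ = θ₂ = 0`. -/
theorem stmt_14 (b₁ b₂ θ₁ θ₂ x₁ x₂ : ℝ)
    (hx₁ : 0 < x₁) (hx₂ : 0 < x₂) (hb : b₁ ≤ b₂)
    (hθ₁ : 0 ≤ θ₁) (hθ₂ : 0 ≤ θ₂)
    (hcond : (θ₁ - θ₂) / (x₁ + x₂) < b₂ - b₁) :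
    ((b₁ * x₁ + θ₁) + (b₂ * x₂ + θ₂)) - (b₁ * (x₁ + x₂) + θ₁)
        = (b₂ - b₁) * x₂ + θ₂ ∧
      (x₂ * θ₁ + x₁ * θ₂) / (x₁ + x₂) < (b₂ - b₁) * x₂ + θ₂ ∧
      (¬(θ₁ = 0 ∧ θ₂ = 0) → 0 < (x₂ * θ₁ + x₁ * θ₂) / (x₁ + x₂)) := by
  have hs : 0 < x₁ + x₂ := by linarith
  have hc : θ₁ - θ₂ < (b₂ - b₁) * (x₁ + x₂) := (div_lt_iff₀ hs).mp hcond
  refine ⟨by ring, ?_, ?_⟩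
  · rw [div_lt_iff₀ hs]; nlinarith
  · intro h
    have : 0 < x₂ * θ₁ + x₁ * θ₂ := by
      rcases lt_or_eq_of_le hθ₁ with h1 | h1
      · nlinarith
      · rcases lt_or_eq_of_le hθ₂ with h2 | h2
        · nlinarith
        · exact absurd ⟨h1.symm, h2.symm⟩ h
    positivity
end
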